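/- Let (u_n) be a sequence of square-integrable functions ℝ² → ℝ converging pointwise almost everywhere to a square-integrable function u : ℝ² → ℝ with ∫_{ℝ²} u² dx > 0. Let (v_n) be a sequence of square-integrable functions ℝ² → ℝ such that sup_n ∫_{ℝ²} v_n² dx < ∞ and sup_n ∬_{ℝ²×ℝ²} log(1+‖x−y‖)·u_n(x)²v_n(y)² dxdy < ∞. Then there exist n₀ ∈ ℕ and C > 0 such that ∫_{ℝ²} log(1+‖x‖)·v_n(x)² dx < C for all n ≥ n₀. -/

import Mathlib

open MeasureTheory Filter

abbrev E2 := EuclideanSpace ℝ (Fin 2)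

open Metric
open scoped ENNReal Topology

/-!
Since `∫ u₀² > 0`, some ball `B(0, R)` carries mass of `u₀²`, and by Fatou's lemma a fixed amount
`ε > 0` of the mass of `uₙ²` stays in it for all large `n`. For `‖x‖ < R` and `‖y‖ ≥ 2R + 2` one has
`log (1 + ‖y‖) ≤ 2 log (1 + ‖x - y‖)`, so the double integral bounds
`ε ∫_{‖y‖ ≥ 2R+2} log (1 + ‖y‖) vₙ(y)² dy`; on `B(0, 2R + 2)` the weight is at most `log (2R + 3)`
and `∫ vₙ²` is bounded.
-/

theorem log_one_add_norm_le_two_mul_log_one_add_norm_sub {F : Type*} [SeminormedAddCommGroup F]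
    {x y : F} {R : ℝ} (hx : ‖x‖ ≤ R) (hy : 2 * R + 2 ≤ ‖y‖) :
    Real.log (1 + ‖y‖) ≤ 2 * Real.log (1 + ‖x - y‖) := by
  have hxy : ‖y‖ - R ≤ ‖x - y‖ := by
    have := norm_sub_norm_le y x
    rw [norm_sub_rev] at this
    linarith
  calc Real.log (1 + ‖y‖) ≤ Real.log ((1 + ‖x - y‖) ^ 2) :=
        Real.log_le_log (by positivity) (by nlinarith [norm_nonneg x, norm_nonneg (x - y)])
    _ = 2 * Real.log (1 + ‖x - y‖) := by rw [Real.log_pow]; norm_num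

theorem exists_setLIntegral_ball_pos {α : Type*} [PseudoMetricSpace α] [MeasurableSpace α]
    {μ : Measure α} {f : α → ℝ≥0∞} (c : α) (hf : 0 < ∫⁻ x, f x ∂μ) :
    ∃ R : ℝ, 0 < ∫⁻ x in ball c R, f x ∂μ := by
  by_contra! h
  have hcover : ∫⁻ x, f x ∂μ ≤ ∑' n : ℕ, ∫⁻ x in ball c n, f x ∂μ := by
    rw [← setLIntegral_univ, ← iUnion_ball_nat c]
    exact lintegral_iUnion_le _ _
  rw [ENNReal.tsum_eq_zero.2 fun n : ℕ => le_zero_iff.1 (h n)] at hcover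
  exact hf.ne' (le_zero_iff.1 hcover)

theorem eventually_lt_lintegral_of_ae_tendsto {α : Type*} [MeasurableSpace α] {μ : Measure α}
    {f : ℕ → α → ℝ≥0∞} {g : α → ℝ≥0∞} (hf : ∀ n, AEMeasurable (f n) μ)
    (hlim : ∀ᵐ x ∂μ, Tendsto (fun n => f n x) atTop (𝓝 (g x))) {c : ℝ≥0∞}
    (hc : c < ∫⁻ x, g x ∂μ) : ∀ᶠ n in atTop, c < ∫⁻ x, f n x ∂μ := by
  refine eventually_lt_of_lt_liminf (hc.trans_le ?_)
  calc ∫⁻ x, g x ∂μ = ∫⁻ x, liminf (fun n => f n x) atTop ∂μ :=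
        lintegral_congr_ae (hlim.mono fun x hx => hx.liminf_eq.symm)
    _ ≤ liminf (fun n => ∫⁻ x, f n x ∂μ) atTop := lintegral_liminf_le' hf

theorem exists_ball_eventually_le_setLIntegral {α : Type*} [PseudoMetricSpace α]
    [MeasurableSpace α] {μ : Measure α} {f : ℕ → α → ℝ≥0∞} {g : α → ℝ≥0∞}
    (hf : ∀ n, AEMeasurable (f n) μ) (hlim : ∀ᵐ x ∂μ, Tendsto (fun n => f n x) atTop (𝓝 (g x)))
    (hg : 0 < ∫⁻ x, g x ∂μ) (c : α) :
    ∃ R : ℝ, ∃ ε : ℝ≥0∞, ε ≠ 0 ∧ ε ≠ ∞ ∧ ∀ᶠ n in atTop, ε ≤ ∫⁻ x in ball c R, f n x ∂μ := by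
  obtain ⟨R, hR⟩ := exists_setLIntegral_ball_pos c hg
  obtain ⟨ε, hε0, hεR⟩ := exists_between hR
  exact ⟨R, ε, hε0.ne', hεR.ne_top, (eventually_lt_lintegral_of_ae_tendsto
    (fun n => (hf n).restrict) (ae_restrict_of_ae hlim) hεR).mono fun _ => le_of_lt⟩

section LogWeight

variable {E : Type*} [NormedAddCommGroup E] [MeasurableSpace E] [OpensMeasurableSpace E]
  {μ : Measure E}

theorem setLIntegral_ball_log_weight_le (g : E → ℝ≥0∞) (M : ℝ) :
    ∫⁻ y in ball 0 M, ENNReal.ofReal (Real.log (1 + ‖y‖)) * g y ∂μ ≤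
      ENNReal.ofReal (Real.log (1 + M)) * ∫⁻ y, g y ∂μ := by
  calc ∫⁻ y in ball 0 M, ENNReal.ofReal (Real.log (1 + ‖y‖)) * g y ∂μ
      ≤ ∫⁻ y in ball 0 M, ENNReal.ofReal (Real.log (1 + M)) * g y ∂μ := by
        refine setLIntegral_mono' measurableSet_ball fun y hy => ?_
        have hyM : ‖y‖ < M := mem_ball_zero_iff.1 hy
        gcongr
    _ = ENNReal.ofReal (Real.log (1 + M)) * ∫⁻ y in ball 0 M, g y ∂μ :=
        lintegral_const_mul' _ _ ENNReal.ofReal_ne_top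
    _ ≤ ENNReal.ofReal (Real.log (1 + M)) * ∫⁻ y, g y ∂μ := by
        gcongr
        exact Measure.restrict_le_self

theorem mul_setLIntegral_compl_ball_log_weight_le [SFinite μ] {f g : E → ℝ≥0∞}
    (hf : AEMeasurable f μ) (hg : AEMeasurable g μ) (R : ℝ) :
    (∫⁻ x in ball 0 R, f x ∂μ) *
        ∫⁻ y in (ball 0 (2 * R + 2))ᶜ, ENNReal.ofReal (Real.log (1 + ‖y‖)) * g y ∂μ ≤
      2 * ∫⁻ z, ENNReal.ofReal (Real.log (1 + ‖z.1 - z.2‖)) * f z.1 * g z.2 ∂μ.prod μ := by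
  have hw : Measurable fun y : E => ENNReal.ofReal (Real.log (1 + ‖y‖)) := by fun_prop
  have hpointwise : ∀ z ∈ ball (0 : E) R ×ˢ (ball 0 (2 * R + 2))ᶜ,
      f z.1 * (ENNReal.ofReal (Real.log (1 + ‖z.2‖)) * g z.2) ≤
        2 * (ENNReal.ofReal (Real.log (1 + ‖z.1 - z.2‖)) * f z.1 * g z.2) := by
    rintro ⟨x, y⟩ ⟨hx, hy⟩
    have hlog := log_one_add_norm_le_two_mul_log_one_add_norm_sub
      (mem_ball_zero_iff.1 hx).le (not_lt.1 (mt mem_ball_zero_iff.2 hy))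
    have hweight : ENNReal.ofReal (Real.log (1 + ‖y‖)) ≤
        2 * ENNReal.ofReal (Real.log (1 + ‖x - y‖)) := by
      rw [← ENNReal.ofReal_ofNat 2, ← ENNReal.ofReal_mul zero_le_two]
      exact ENNReal.ofReal_le_ofReal hlog
    calc f x * (ENNReal.ofReal (Real.log (1 + ‖y‖)) * g y)
        ≤ f x * (2 * ENNReal.ofReal (Real.log (1 + ‖x - y‖)) * g y) := by gcongr
      _ = 2 * (ENNReal.ofReal (Real.log (1 + ‖x - y‖)) * f x * g y) := by ring
  calc (∫⁻ x in ball 0 R, f x ∂μ) *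
        ∫⁻ y in (ball 0 (2 * R + 2))ᶜ, ENNReal.ofReal (Real.log (1 + ‖y‖)) * g y ∂μ
      = ∫⁻ z in ball 0 R ×ˢ (ball 0 (2 * R + 2))ᶜ,
          f z.1 * (ENNReal.ofReal (Real.log (1 + ‖z.2‖)) * g z.2) ∂μ.prod μ := by
        rw [← Measure.prod_restrict,
          lintegral_prod_mul (g := fun y => ENNReal.ofReal (Real.log (1 + ‖y‖)) * g y)
            hf.restrict (hw.aemeasurable.mul hg).restrict]
    _ ≤ ∫⁻ z in ball 0 R ×ˢ (ball 0 (2 * R + 2))ᶜ,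
          2 * (ENNReal.ofReal (Real.log (1 + ‖z.1 - z.2‖)) * f z.1 * g z.2) ∂μ.prod μ :=
        setLIntegral_mono' (measurableSet_ball.prod measurableSet_ball.compl) hpointwise
    _ = 2 * ∫⁻ z in ball 0 R ×ˢ (ball 0 (2 * R + 2))ᶜ,
          ENNReal.ofReal (Real.log (1 + ‖z.1 - z.2‖)) * f z.1 * g z.2 ∂μ.prod μ :=
        lintegral_const_mul' _ _ ENNReal.ofNat_ne_top
    _ ≤ 2 * ∫⁻ z, ENNReal.ofReal (Real.log (1 + ‖z.1 - z.2‖)) * f z.1 * g z.2 ∂μ.prod μ := by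
        gcongr
        exact Measure.restrict_le_self

theorem lintegral_log_weight_le [SFinite μ] {f g : E → ℝ≥0∞}
    (hf : AEMeasurable f μ) (hg : AEMeasurable g μ) (R : ℝ) {c : ℝ≥0∞} (hc0 : c ≠ 0)
    (hctop : c ≠ ∞) (hc : c ≤ ∫⁻ x in ball 0 R, f x ∂μ) :
    ∫⁻ y, ENNReal.ofReal (Real.log (1 + ‖y‖)) * g y ∂μ ≤
      ENNReal.ofReal (Real.log (1 + (2 * R + 2))) * ∫⁻ y, g y ∂μ +
        2 * (∫⁻ z, ENNReal.ofReal (Real.log (1 + ‖z.1 - z.2‖)) * f z.1 * g z.2 ∂μ.prod μ) / c := by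
  rw [← lintegral_add_compl _ (measurableSet_ball (x := (0 : E)) (ε := 2 * R + 2))]
  gcongr
  · exact setLIntegral_ball_log_weight_le g _
  · rw [ENNReal.le_div_iff_mul_le (.inl hc0) (.inl hctop), mul_comm]
    exact (mul_le_mul_left hc _).trans (mul_setLIntegral_compl_ball_log_weight_le hf hg R)

theorem lintegral_log_weight_mul_sq_le [SFinite μ] {u v : E → ℝ}
    (hu : AEMeasurable u μ) (hv : AEMeasurable v μ) (R : ℝ) {c : ℝ≥0∞} (hc0 : c ≠ 0)
    (hctop : c ≠ ∞) (hc : c ≤ ∫⁻ x in ball 0 R, ENNReal.ofReal (u x ^ 2) ∂μ) :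
    ∫⁻ y, ENNReal.ofReal (Real.log (1 + ‖y‖) * v y ^ 2) ∂μ ≤
      ENNReal.ofReal (Real.log (1 + (2 * R + 2))) * ∫⁻ y, ENNReal.ofReal (v y ^ 2) ∂μ +
        2 * (∫⁻ z, ENNReal.ofReal (Real.log (1 + ‖z.1 - z.2‖) * u z.1 ^ 2 * v z.2 ^ 2)
          ∂μ.prod μ) / c := by
  have hlog (x : E) : 0 ≤ Real.log (1 + ‖x‖) :=
    Real.log_nonneg (le_add_of_nonneg_right (norm_nonneg x))
  simp only [ENNReal.ofReal_mul (mul_nonneg (hlog _) (sq_nonneg _)), ENNReal.ofReal_mul (hlog _)]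
  exact lintegral_log_weight_le (hu.pow_const 2).ennreal_ofReal (hv.pow_const 2).ennreal_ofReal
    R hc0 hctop hc

end LogWeight

theorem stmt2 (u : ℕ → E2 → ℝ) (u₀ : E2 → ℝ)
    (hu : ∀ n, MemLp (u n) 2 (volume : Measure E2))
    (hu₀pos : 0 < ∫ x : E2, (u₀ x) ^ 2)
    (hae : ∀ᵐ x : E2, Tendsto (fun n => u n x) atTop (nhds (u₀ x)))
    (v : ℕ → E2 → ℝ) (hv : ∀ n, MemLp (v n) 2 (volume : Measure E2))
    (hvbd : ∃ A : ℝ, ∀ n, (∫ x : E2, (v n x) ^ 2) ≤ A)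
    (hB : (⨆ n, ∫⁻ z : E2 × E2,
        ENNReal.ofReal (Real.log (1 + ‖z.1 - z.2‖) * (u n z.1) ^ 2 * (v n z.2) ^ 2)) < ⊤) :
    ∃ n₀ : ℕ, ∃ C : ℝ, 0 < C ∧ ∀ n ≥ n₀,
      (∫⁻ x : E2, ENNReal.ofReal (Real.log (1 + ‖x‖) * (v n x) ^ 2)) <
        ENNReal.ofReal C := by
  obtain ⟨A, hA⟩ := hvbd
  have hv_sq (n : ℕ) : ∫⁻ x, ENNReal.ofReal (v n x ^ 2) ≤ ENNReal.ofReal A := by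
    rw [← ofReal_integral_eq_lintegral_ofReal (hv n).integrable_sq
      (.of_forall fun x => sq_nonneg _)]
    exact ENNReal.ofReal_le_ofReal (hA n)
  have hu₀_sq : 0 < ∫⁻ x, ENNReal.ofReal (u₀ x ^ 2) := by
    rw [← ofReal_integral_eq_lintegral_ofReal (.of_integral_ne_zero hu₀pos.ne')
      (.of_forall fun x => sq_nonneg _)]
    exact ENNReal.ofReal_pos.2 hu₀pos
  obtain ⟨R, ε, hε0, hεtop, hε⟩ := exists_ball_eventually_le_setLIntegral
    (fun n => ((hu n).1.aemeasurable.pow_const 2).ennreal_ofReal)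
    (hae.mono fun x hx => ENNReal.tendsto_ofReal (hx.pow 2)) hu₀_sq 0
  obtain ⟨n₀, hn₀⟩ := eventually_atTop.1 hε
  set B := ⨆ n, ∫⁻ z : E2 × E2,
    ENNReal.ofReal (Real.log (1 + ‖z.1 - z.2‖) * (u n z.1) ^ 2 * (v n z.2) ^ 2)
  set K := ENNReal.ofReal (Real.log (1 + (2 * R + 2))) * ENNReal.ofReal A + 2 * B / ε
  have hK : K < ∞ := ENNReal.add_lt_top.2 ⟨ENNReal.mul_lt_top ENNReal.ofReal_lt_top
    ENNReal.ofReal_lt_top, ENNReal.div_lt_top (ENNReal.mul_ne_top ENNReal.ofNat_ne_top hB.ne)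
    hε0⟩
  obtain ⟨C, -, hKC, -⟩ := ENNReal.lt_iff_exists_real_btwn.1 hK
  refine ⟨n₀, C, ENNReal.ofReal_pos.1 (zero_le.trans_lt hKC), fun n hn => ?_⟩
  calc ∫⁻ x, ENNReal.ofReal (Real.log (1 + ‖x‖) * v n x ^ 2)
      ≤ ENNReal.ofReal (Real.log (1 + (2 * R + 2))) * (∫⁻ x, ENNReal.ofReal (v n x ^ 2)) +
          2 * (∫⁻ z : E2 × E2,
            ENNReal.ofReal (Real.log (1 + ‖z.1 - z.2‖) * (u n z.1) ^ 2 * (v n z.2) ^ 2)) / ε := by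
        rw [Measure.volume_eq_prod]
        exact lintegral_log_weight_mul_sq_le (hu n).1.aemeasurable (hv n).1.aemeasurable R
          hε0 hεtop (hn₀ n hn)
    _ ≤ K := add_le_add (mul_le_mul_right (hv_sq n) _)
        (ENNReal.div_le_div_right (mul_le_mul_right (le_iSup _ n) 2) ε)
    _ < ENNReal.ofReal C := hKC
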